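/- Let w be an infinite word that is linearly recurrent, i.e., there is a constant K such that for every n, every factor of w of length Kn contains every factor of w of length n. If there exists C > 0 such that for every n the total number of distinct abelian-square factors of w of length at most n is at least C·n², then w is uniformly abelian-square-rich: there exists C' > 0 such that every factor v of w contains at least C'·|v|² distinct abelian-square factors. -/

import Mathlib

/-- `u` is a factor of the infinite word `s`. -/
def FactorOf {A : Type*} (u : List A) (s : ℕ → A) : Prop :=
  ∃ i : ℕ, u = (List.range u.length).map fun k => s (i + k)

/-- An abelian square: a word `x ++ y` with `|x| = |y|` and equal Parikh
vectors. -/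
def IsAbelianSquare {A : Type*} [DecidableEq A] (w : List A) : Prop :=
  ∃ x y : List A, w = x ++ y ∧ x.length = y.length ∧
    ∀ c, x.count c = y.count c

/-!
If `w` is linearly recurrent with constant `K`, a factor `v` of `w` contains every factor of `w`
of length at most `|v| / K`, in particular every abelian-square factor of that length. Hence
`v` has at least `C (|v| / K)² ≥ C |v|² / (4K²)` abelian-square factors once `|v| ≥ K`; shorter
factors still contain the empty abelian square, which covers the remaining bounded range.
-/

section Words

variable {A : Type*}

theorem FactorOf.nil (w : ℕ → A) : FactorOf [] w := ⟨0, rfl⟩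

theorem FactorOf.take {v : List A} {w : ℕ → A} (hv : FactorOf v w) (k : ℕ) :
    FactorOf (v.take k) w := by
  obtain ⟨i, hi⟩ := hv
  refine ⟨i, ?_⟩
  conv_lhs => rw [hi]
  rw [← List.map_take, List.take_range, List.length_take]

def LinearlyRecurrentWith (w : ℕ → A) (K : ℕ) : Prop :=
  ∀ n : ℕ, ∀ v : List A, FactorOf v w → v.length = K * n →
    ∀ u : List A, FactorOf u w → u.length = n → u <:+: v

namespace LinearlyRecurrentWith

variable {w : ℕ → A} {K : ℕ}

theorem pos (hK : LinearlyRecurrentWith w K) : 0 < K := by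
  refine Nat.pos_of_ne_zero fun hK0 => ?_
  subst hK0
  have := hK 1 [] (FactorOf.nil w) rfl [w 0] ⟨0, rfl⟩ rfl
  simpa using this.length_le

theorem infix_of_mul_length_le (hK : LinearlyRecurrentWith w K) {u v : List A}
    (hu : FactorOf u w) (hv : FactorOf v w) (hlen : K * u.length ≤ v.length) : u <:+: v :=
  (hK u.length _ (hv.take (K * u.length)) (List.length_take_of_le hlen) u hu rfl).trans
    (List.take_prefix _ _).isInfix

end LinearlyRecurrentWith

section AbelianSquares

variable [DecidableEq A]

def abelianSquareInfixes (v : List A) : Set (List A) :=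
  {x | x <:+: v ∧ IsAbelianSquare x}

theorem IsAbelianSquare.nil : IsAbelianSquare ([] : List A) :=
  ⟨[], [], rfl, rfl, fun _ => rfl⟩

theorem abelianSquareInfixes_finite (v : List A) : (abelianSquareInfixes v).Finite :=
  v.sublists.toFinset.finite_toSet.subset fun x hx => by
    simpa [List.mem_sublists] using hx.1.sublist

theorem one_le_ncard_abelianSquareInfixes (v : List A) : 1 ≤ (abelianSquareInfixes v).ncard :=
  (Set.ncard_pos (abelianSquareInfixes_finite v)).2 ⟨[], List.nil_infix, IsAbelianSquare.nil⟩

theorem LinearlyRecurrentWith.abelianSquareFactors_subset {w : ℕ → A} {K : ℕ}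
    (hK : LinearlyRecurrentWith w K) {v : List A} (hv : FactorOf v w) :
    {u | FactorOf u w ∧ IsAbelianSquare u ∧ u.length ≤ v.length / K} ⊆
      abelianSquareInfixes v := by
  rintro u ⟨hu, hsq, hlen⟩
  exact ⟨hK.infix_of_mul_length_le hu hv
    ((Nat.mul_le_mul_left K hlen).trans (Nat.mul_div_le _ _)), hsq⟩

end AbelianSquares

end Words

theorem Nat.le_two_mul_mul_div {m K : ℕ} (hK : 0 < K) (hKm : K ≤ m) : m ≤ 2 * (K * (m / K)) := by
  have hlt := Nat.lt_div_mul_add (a := m) hK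
  have hq : 1 ≤ m / K := (Nat.one_le_div_iff hK).2 hKm
  nlinarith

/-- Let `w` be linearly recurrent with constant `K` (every factor of length
`K·n` contains every factor of length `n`). If the number of distinct
abelian-square factors of `w` of length at most `n` is at least `C·n²` for some
`C > 0`, then `w` is uniformly abelian-square-rich: there is `C' > 0` such that
every factor `v` of `w` contains at least `C'·|v|²` distinct abelian-square
factors. -/
theorem stmt12 {A : Type*} [DecidableEq A] (w : ℕ → A) (K : ℕ)
    (hK : ∀ n : ℕ, ∀ v : List A, FactorOf v w → v.length = K * n →
      ∀ u : List A, FactorOf u w → u.length = n → u <:+: v)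
    (C : ℝ) (hC : 0 < C)
    (h : ∀ n : ℕ, C * (n : ℝ) ^ 2 ≤
      ({u : List A | FactorOf u w ∧ IsAbelianSquare u ∧
        u.length ≤ n}.ncard : ℝ)) :
    ∃ C' : ℝ, 0 < C' ∧ ∀ v : List A, FactorOf v w →
      C' * (v.length : ℝ) ^ 2 ≤
        ({x : List A | x <:+: v ∧ IsAbelianSquare x}.ncard : ℝ) := by
  have hK : LinearlyRecurrentWith w K := hK
  have hKpos : (0 : ℝ) < K := by exact_mod_cast hK.pos
  refine ⟨min C 1 / (4 * (K : ℝ) ^ 2), by positivity, fun v hv => ?_⟩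
  change _ ≤ ((abelianSquareInfixes v).ncard : ℝ)
  rcases lt_or_ge v.length K with hshort | hlong
  · have hm : (v.length : ℝ) ≤ K := by exact_mod_cast hshort.le
    have hone : (1 : ℝ) ≤ (abelianSquareInfixes v).ncard := by
      exact_mod_cast one_le_ncard_abelianSquareInfixes v
    rw [div_mul_eq_mul_div, div_le_iff₀ (by positivity)]
    nlinarith [min_le_right C 1, le_min hC.le zero_le_one]
  · set n := v.length / K
    have hmn : (v.length : ℝ) ≤ 2 * K * n := by
      exact_mod_cast (Nat.le_two_mul_mul_div hK.pos hlong).trans_eq (by ring)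
    have hsub : ({u | FactorOf u w ∧ IsAbelianSquare u ∧ u.length ≤ n}.ncard : ℝ) ≤
        (abelianSquareInfixes v).ncard := by
      exact_mod_cast Set.ncard_le_ncard (hK.abelianSquareFactors_subset hv)
        (abelianSquareInfixes_finite v)
    calc min C 1 / (4 * (K : ℝ) ^ 2) * (v.length : ℝ) ^ 2
        ≤ min C 1 / (4 * (K : ℝ) ^ 2) * (2 * K * n) ^ 2 := by gcongr
      _ = min C 1 * (n : ℝ) ^ 2 := by field_simp; ring
      _ ≤ C * (n : ℝ) ^ 2 := by gcongr; exact min_le_left _ _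
      _ ≤ _ := (h n).trans hsub
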